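/- Let θ ∈ ℝ and y > 0. Then 0 < 2πy/sinh(2πy) < 1, and for x ∈ ℝ the point A_θ(x + iy) is real if and only if there exists k ∈ ℤ such that x = k + (1/(2π))·arccos(−2πy/sinh(2πy)) or x = k − (1/(2π))·arccos(−2πy/sinh(2πy)). Thus at each height y > 0 the preimage of ℝ under A_θ meets the horizontal line Im z = y in exactly two points modulo ℤ, lying on the analytic curves Γ^k_± : Re z = k ± (1/(2π))·arccos(−2π Im z / sinh(2π Im z)). -/

import Mathlib

/-- The Arnold (standard) map `A_θ(z) = z + θ + sin(2πz)/(2π)` as an entire function. -/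
noncomputable def arnoldC (θ : ℂ) (z : ℂ) : ℂ :=
  z + θ + Complex.sin (2 * (Real.pi : ℂ) * z) / (2 * (Real.pi : ℂ))

/-! Writing `z = x + iy`, the imaginary part of `A_θ z` is `y + cos(2πx) sinh(2πy)/(2π)`, so
`A_θ z` is real exactly when `cos(2πx) = -2πy/sinh(2πy)`. Since `sinh t > t` for `t > 0`, this
value lies in `(-1, 0)`, and the solutions are `x ≡ ±arccos(-2πy/sinh(2πy))/(2π) mod 1`. -/

open Real

lemma Complex.sin_im (z : ℂ) : (Complex.sin z).im = Real.cos z.re * Real.sinh z.im := by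
  conv_lhs => rw [← Complex.re_add_im z, Complex.sin_add_mul_I]
  simp [← Complex.ofReal_sin, ← Complex.ofReal_cos, ← Complex.ofReal_cosh, ← Complex.ofReal_sinh]

lemma arnoldC_im (θ : ℝ) (z : ℂ) :
    (arnoldC θ z).im = z.im + cos (2 * π * z.re) * sinh (2 * π * z.im) / (2 * π) := by
  have h : 2 * (π : ℂ) = ((2 * π : ℝ) : ℂ) := by push_cast; ring
  rw [arnoldC, h, Complex.add_im, Complex.add_im, Complex.div_ofReal_im, Complex.sin_im,
    Complex.re_ofReal_mul, Complex.im_ofReal_mul, Complex.ofReal_im, add_zero]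

lemma Real.div_sinh_mem_Ioo {t : ℝ} (ht : 0 < t) : t / sinh t ∈ Set.Ioo 0 1 := by
  have hlt : t < sinh t := self_lt_sinh_iff.2 ht
  exact ⟨div_pos ht (ht.trans hlt), (div_lt_one (ht.trans hlt)).2 hlt⟩

lemma cos_two_pi_mul_eq_iff {c : ℝ} (hc₁ : -1 ≤ c) (hc₂ : c ≤ 1) (x : ℝ) :
    cos (2 * π * x) = c ↔
      ∃ k : ℤ, x = k + 1 / (2 * π) * arccos c ∨ x = k - 1 / (2 * π) * arccos c := by
  have hπ : 2 * π ≠ 0 := by positivity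
  conv_lhs => rw [eq_comm, ← cos_arccos hc₁ hc₂]
  rw [cos_eq_cos_iff]
  refine exists_congr fun k => or_congr ⟨fun h => ?_, ?_⟩ ⟨fun h => ?_, ?_⟩
  · field_simp
    linarith
  · rintro rfl
    field_simp
  · field_simp
    linarith
  · rintro rfl
    field_simp

/-- Let `θ ∈ ℝ` and `y > 0`. Then `0 < 2πy/sinh(2πy) < 1`, and for `x ∈ ℝ`
the point `A_θ(x + iy)` is real iff there is `k ∈ ℤ` with
`x = k ± (1/(2π))·arccos(−2πy/sinh(2πy))`. Thus at each height `y > 0` the preimage of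
`ℝ` under `A_θ` meets the line `Im z = y` in exactly two points modulo `ℤ`, lying on the
analytic curves `Γ^k_± : Re z = k ± (1/(2π))·arccos(−2π Im z / sinh(2π Im z))`. -/
theorem arnold_preimage_curves (θ y : ℝ) (hy : 0 < y) :
    (0 < 2 * Real.pi * y / Real.sinh (2 * Real.pi * y) ∧
      2 * Real.pi * y / Real.sinh (2 * Real.pi * y) < 1) ∧
    (∀ x : ℝ, (arnoldC (θ : ℂ) ((x : ℂ) + (y : ℂ) * Complex.I)).im = 0 ↔
      ∃ k : ℤ,
        x = (k : ℝ) + (1 / (2 * Real.pi)) *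
            Real.arccos (-(2 * Real.pi * y) / Real.sinh (2 * Real.pi * y)) ∨
        x = (k : ℝ) - (1 / (2 * Real.pi)) *
            Real.arccos (-(2 * Real.pi * y) / Real.sinh (2 * Real.pi * y))) := by
  obtain ⟨hpos, hlt⟩ := Real.div_sinh_mem_Ioo (by positivity : 0 < 2 * π * y)
  refine ⟨⟨hpos, hlt⟩, fun x => ?_⟩
  have hsinh : 0 < sinh (2 * π * y) := sinh_pos_iff.2 (by positivity)
  rw [← cos_two_pi_mul_eq_iff (by rw [neg_div]; linarith) (by rw [neg_div]; linarith),
    arnoldC_im, eq_div_iff hsinh.ne']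
  simp only [Complex.add_re, Complex.add_im, Complex.ofReal_re, Complex.ofReal_im,
    Complex.re_ofReal_mul, Complex.im_ofReal_mul, Complex.I_re, Complex.I_im, mul_zero, mul_one,
    add_zero, zero_add]
  have h2π : 2 * π ≠ 0 := by positivity
  rw [← mul_right_inj' h2π, mul_add, mul_div_cancel₀ _ h2π, mul_zero, add_eq_zero_iff_eq_neg']
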